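/- arXiv:1605.02337 — 3 statements merged into one kernel-verified Lean document; each statement's English description precedes it below -/
import Mathlib

section
/- Let P be a nonempty finite set of points in ℝ² contained in an axis-aligned rectangle with corners c₁, c₂, c₃, c₄ such that each edge contains at least one point of P. Then for any line segment L, the maximum over p ∈ P of dist(p, L) is at least the minimum over the four corners cᵢ of dist(cᵢ, L). -/
/-!
`![x, y]` lives in `Fin 2 → ℝ`, so the corner distances are sup-metric distances, and the
Euclidean metric dominates the sup metric; it therefore suffices to find a point of `P` whose sup
distance to `L` is large. Suppose the points of `P` on the left, bottom and right edges are all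
closer than `r` to `L` in the sup metric, while both bottom corners are farther. The point of `L`
near the left witness is within `r` of `x₁` horizontally, so it stays away from the corner
`(x₁, y₁)` vertically and sits above height `y₁ + r`; likewise near the right witness. The point
near the bottom witness is below `y₁ + r`, so it is horizontally more than `r` from both corners
and hence lies strictly between the other two. Three points of a segment cannot be arranged
like that.
-/

open Metric Set

theorem LipschitzWith.infDist_image_le {α β : Type*} [PseudoMetricSpace α] [PseudoMetricSpace β]
    {f : α → β} (hf : LipschitzWith 1 f) (x : α) (s : Set α) :
    infDist (f x) (f '' s) ≤ infDist x s := by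
  rcases s.eq_empty_or_nonempty with rfl | hs
  · simp
  refine (le_infDist hs).2 fun y hy => ?_
  calc infDist (f x) (f '' s) ≤ dist (f x) (f y) := infDist_le_dist_of_mem (mem_image_of_mem f hy)
    _ ≤ dist x y := by simpa using hf.dist_le_mul x y

theorem PiLp.infDist_ofLp_segment_le {p : ENNReal} [Fact (1 ≤ p)] {ι : Type*} [Fintype ι]
    (x a b : PiLp p fun _ : ι => ℝ) :
    infDist x.ofLp (segment ℝ a.ofLp b.ofLp) ≤ infDist x (segment ℝ a b) := by
  have himage : WithLp.ofLp '' segment ℝ a b = segment ℝ a.ofLp b.ofLp :=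
    image_segment ℝ (WithLp.linearEquiv p ℝ (ι → ℝ)).toLinearMap.toAffineMap a b
  rw [← himage]
  exact (PiLp.lipschitzWith_ofLp p _).infDist_image_le x _

theorem min_le_of_mem_segment_of_lt_of_lt {E : Type*} [AddCommGroup E] [Module ℝ E]
    (f g : E →ₗ[ℝ] ℝ) {a b u v w : E} (hu : u ∈ segment ℝ a b) (hv : v ∈ segment ℝ a b)
    (hw : w ∈ segment ℝ a b) (huv : f u < f v) (hvw : f v < f w) :
    min (g u) (g w) ≤ g v := by
  rw [segment_eq_image_lineMap] at hu hv hw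
  obtain ⟨tu, -, rfl⟩ := hu
  obtain ⟨tv, -, rfl⟩ := hv
  obtain ⟨tw, -, rfl⟩ := hw
  simp only [AffineMap.lineMap_apply, vsub_eq_sub, vadd_eq_add, map_add, map_smul, map_sub,
    smul_eq_mul] at huv hvw ⊢
  -- `(f v - f u) * (f w - f v) = (tv - tu) * (tw - tv) * (f b - f a) ^ 2`, and likewise for `g`.
  have hpos : 0 < (tv - tu) * (tw - tv) := by
    have := mul_pos (sub_pos.2 huv) (sub_pos.2 hvw)
    nlinarith [sq_nonneg (f b - f a)]
  rw [min_le_iff]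
  by_contra! h
  nlinarith [mul_nonneg hpos.le (sq_nonneg (g b - g a))]

theorem dist_fin_two_le_max (c n : Fin 2 → ℝ) : dist c n ≤ max |c 0 - n 0| |c 1 - n 1| := by
  refine (dist_pi_le_iff (le_max_of_le_left (abs_nonneg _))).2 fun i => ?_
  fin_cases i
  · exact (Real.dist_eq _ _).trans_le (le_max_left _ _)
  · exact (Real.dist_eq _ _).trans_le (le_max_right _ _)

theorem exists_abs_sub_lt_of_infDist_lt {S : Set (Fin 2 → ℝ)} (hS : S.Nonempty) {q : Fin 2 → ℝ}
    {r : ℝ} (h : infDist q S < r) : ∃ n ∈ S, |q 0 - n 0| < r ∧ |q 1 - n 1| < r := by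
  obtain ⟨n, hn, hqn⟩ := (infDist_lt_iff hS).1 h
  refine ⟨n, hn, ?_, ?_⟩ <;> rw [← Real.dist_eq] <;> exact (dist_le_pi_dist q n _).trans_lt hqn

theorem lt_max_abs_sub_of_lt_infDist {S : Set (Fin 2 → ℝ)} {c n : Fin 2 → ℝ} {r : ℝ}
    (h : r < infDist c S) (hn : n ∈ S) : r < max |c 0 - n 0| |c 1 - n 1| :=
  h.trans_le ((infDist_le_dist_of_mem hn).trans (dist_fin_two_le_max c n))

theorem add_lt_of_abs_sub_lt_of_lt_abs_sub {a b c r : ℝ} (hab : |a - b| < r) (hca : c ≤ a)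
    (hcb : r < |c - b|) : c + r < b := by
  rw [abs_sub_lt_iff] at hab
  rcases lt_abs.1 hcb with h | h <;> linarith

theorem lt_sub_of_abs_sub_lt_of_lt_abs_sub {a b c r : ℝ} (hab : |a - b| < r) (hac : a ≤ c)
    (hcb : r < |c - b|) : b < c - r := by
  rw [abs_sub_lt_iff] at hab
  rcases lt_abs.1 hcb with h | h <;> linarith

section BottomCorners

variable {a b ql qb qr : Fin 2 → ℝ} {x₁ x₂ y₁ : ℝ}

theorem min_infDist_bottom_corners_le_of_infDist_lt {r : ℝ}
    (hl₀ : ql 0 = x₁) (hl₁ : y₁ ≤ ql 1) (hb₁ : qb 1 = y₁) (hb₀ : x₁ ≤ qb 0) (hb₀' : qb 0 ≤ x₂)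
    (hr₀ : qr 0 = x₂) (hr₁ : y₁ ≤ qr 1) (hl : infDist ql (segment ℝ a b) < r)
    (hb : infDist qb (segment ℝ a b) < r) (hr : infDist qr (segment ℝ a b) < r) :
    min (infDist ![x₁, y₁] (segment ℝ a b)) (infDist ![x₂, y₁] (segment ℝ a b)) ≤ r := by
  by_contra! h
  obtain ⟨hc₁, hc₂⟩ := lt_min_iff.1 h
  have hS : (segment ℝ a b).Nonempty := ⟨a, left_mem_segment ℝ a b⟩
  obtain ⟨nl, hnl, dl₀, dl₁⟩ := exists_abs_sub_lt_of_infDist_lt hS hl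
  obtain ⟨nb, hnb, db₀, db₁⟩ := exists_abs_sub_lt_of_infDist_lt hS hb
  obtain ⟨nr, hnr, dr₀, dr₁⟩ := exists_abs_sub_lt_of_infDist_lt hS hr
  rw [hl₀] at dl₀
  rw [hb₁] at db₁
  rw [hr₀] at dr₀
  have hnl₁ : y₁ + r < nl 1 := by
    refine add_lt_of_abs_sub_lt_of_lt_abs_sub dl₁ hl₁ ?_
    simpa [dl₀.not_gt] using lt_max_abs_sub_of_lt_infDist hc₁ hnl
  have hnr₁ : y₁ + r < nr 1 := by
    refine add_lt_of_abs_sub_lt_of_lt_abs_sub dr₁ hr₁ ?_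
    simpa [dr₀.not_gt] using lt_max_abs_sub_of_lt_infDist hc₂ hnr
  have hnb₀ : x₁ + r < nb 0 := by
    refine add_lt_of_abs_sub_lt_of_lt_abs_sub db₀ hb₀ ?_
    simpa [db₁.not_gt] using lt_max_abs_sub_of_lt_infDist hc₁ hnb
  have hnb₀' : nb 0 < x₂ - r := by
    refine lt_sub_of_abs_sub_lt_of_lt_abs_sub db₀ hb₀' ?_
    simpa [db₁.not_gt] using lt_max_abs_sub_of_lt_infDist hc₂ hnb
  rw [abs_sub_lt_iff] at dl₀ db₁ dr₀
  have := min_le_of_mem_segment_of_lt_of_lt (LinearMap.proj 0) (LinearMap.proj 1) hnl hnb hnr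
    (by simp only [LinearMap.proj_apply]; linarith) (by simp only [LinearMap.proj_apply]; linarith)
  simp only [LinearMap.proj_apply, min_le_iff] at this
  rcases this with h | h <;> linarith

theorem min_infDist_bottom_corners_le (hl₀ : ql 0 = x₁) (hl₁ : y₁ ≤ ql 1) (hb₁ : qb 1 = y₁)
    (hb₀ : x₁ ≤ qb 0) (hb₀' : qb 0 ≤ x₂) (hr₀ : qr 0 = x₂) (hr₁ : y₁ ≤ qr 1) :
    min (infDist ![x₁, y₁] (segment ℝ a b)) (infDist ![x₂, y₁] (segment ℝ a b)) ≤
      max (max (infDist ql (segment ℝ a b)) (infDist qb (segment ℝ a b)))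
        (infDist qr (segment ℝ a b)) :=
  le_of_forall_gt_imp_ge_of_dense fun r hr => by
    simp only [max_lt_iff] at hr
    exact min_infDist_bottom_corners_le_of_infDist_lt hl₀ hl₁ hb₁ hb₀ hb₀' hr₀ hr₁
      hr.1.1 hr.1.2 hr.2

end BottomCorners

theorem stmt_2_general (P : Finset (EuclideanSpace ℝ (Fin 2))) (hP : P.Nonempty)
    (x₁ x₂ y₁ y₂ : ℝ)
    (hbox : ∀ p ∈ P, x₁ ≤ p 0 ∧ p 0 ≤ x₂ ∧ y₁ ≤ p 1 ∧ p 1 ≤ y₂)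
    (hbottom : ∃ p ∈ P, p 1 = y₁)
    (hleft : ∃ p ∈ P, p 0 = x₁) (hright : ∃ p ∈ P, p 0 = x₂)
    (s e : EuclideanSpace ℝ (Fin 2)) :
    ∃ p ∈ P,
      min (min (Metric.infDist ![x₁, y₁] (segment ℝ s e))
               (Metric.infDist ![x₂, y₁] (segment ℝ s e)))
          (min (Metric.infDist ![x₂, y₂] (segment ℝ s e))
               (Metric.infDist ![x₁, y₂] (segment ℝ s e)))
        ≤ Metric.infDist p (segment ℝ s e) := by
  obtain ⟨qb, hqb, hqb₁⟩ := hbottom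
  obtain ⟨ql, hql, hql₀⟩ := hleft
  obtain ⟨qr, hqr, hqr₀⟩ := hright
  set S := segment ℝ s.ofLp e.ofLp
  obtain ⟨p, hp, hmax⟩ := P.exists_max_image (fun q => infDist q.ofLp S) hP
  refine ⟨p, hp, ?_⟩
  calc _ ≤ min (infDist ![x₁, y₁] S) (infDist ![x₂, y₁] S) := min_le_left _ _
    _ ≤ max (max (infDist ql.ofLp S) (infDist qb.ofLp S)) (infDist qr.ofLp S) :=
        min_infDist_bottom_corners_le hql₀ (hbox ql hql).2.2.1 hqb₁ (hbox qb hqb).1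
          (hbox qb hqb).2.1 hqr₀ (hbox qr hqr).2.2.1
    _ ≤ infDist p.ofLp S := max_le (max_le (hmax ql hql) (hmax qb hqb)) (hmax qr hqr)
    _ ≤ infDist p (segment ℝ s e) := PiLp.infDist_ofLp_segment_le p s e

/-- If a nonempty finite set `P` of points in the plane is contained in an axis-aligned
rectangle with corners `c₁,...,c₄` and each edge of the rectangle contains a point of `P`,
then for any segment `L = [s,e]`, the maximum distance from `P` to `L` is at least the
minimum corner-to-`L` distance: some `p ∈ P` realizes it. -/
theorem stmt_2 (P : Finset (EuclideanSpace ℝ (Fin 2))) (hP : P.Nonempty)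
    (x₁ x₂ y₁ y₂ : ℝ) (hx : x₁ ≤ x₂) (hy : y₁ ≤ y₂)
    (hbox : ∀ p ∈ P, x₁ ≤ p 0 ∧ p 0 ≤ x₂ ∧ y₁ ≤ p 1 ∧ p 1 ≤ y₂)
    (hbottom : ∃ p ∈ P, p 1 = y₁) (htop : ∃ p ∈ P, p 1 = y₂)
    (hleft : ∃ p ∈ P, p 0 = x₁) (hright : ∃ p ∈ P, p 0 = x₂)
    (s e : EuclideanSpace ℝ (Fin 2)) :
    ∃ p ∈ P,
      min (min (Metric.infDist ![x₁, y₁] (segment ℝ s e))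
               (Metric.infDist ![x₂, y₁] (segment ℝ s e)))
          (min (Metric.infDist ![x₂, y₂] (segment ℝ s e))
               (Metric.infDist ![x₁, y₂] (segment ℝ s e)))
        ≤ Metric.infDist p (segment ℝ s e) :=
  stmt_2_general P hP x₁ x₂ y₁ y₂ hbox hbottom hleft hright s e
end

section
/- If the maximum deviation lower bound d̃_lb computed from key points of an ε-compressed trajectory satisfies d̃_lb − 2ε > ε', then the true maximum deviation of the original (uncompressed) trajectory from the candidate segment exceeds ε'. -/
lemma seg_perturb (ε : ℝ) (s e s' e' : EuclideanSpace ℝ (Fin 2))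
    (hs : dist s s' ≤ ε) (he : dist e e' ≤ ε) (k : EuclideanSpace ℝ (Fin 2)) :
    Metric.infDist k (segment ℝ s e) - ε ≤ Metric.infDist k (segment ℝ s' e') := by
  by_contra h
  push_neg at h
  obtain ⟨y', hy', hlt⟩ := (Metric.infDist_lt_iff ⟨s', left_mem_segment ℝ s' e'⟩).1
    (lt_of_lt_of_le h (le_refl _))
  obtain ⟨a, b, ha, hb, hab, hy⟩ := hy'
  have hmem : a • s + b • e ∈ segment ℝ s e := ⟨a, b, ha, hb, hab, rfl⟩
  have hdist : dist (a • s + b • e) y' ≤ ε := by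
    rw [← hy]
    calc dist (a • s + b • e) (a • s' + b • e')
        ≤ dist (a • s) (a • s') + dist (b • e) (b • e') := dist_add_add_le _ _ _ _
      _ = a * dist s s' + b * dist e e' := by
          rw [dist_smul₀, dist_smul₀, Real.norm_of_nonneg ha, Real.norm_of_nonneg hb]
      _ ≤ a * ε + b * ε := by
          gcongr
      _ = ε := by rw [← add_mul, hab, one_mul]
  have := Metric.infDist_le_dist_of_mem hmem (x := k)
  have h2 : dist k (a • s + b • e) ≤ dist k y' + ε := by
    have ht := dist_triangle k y' (a • s + b • e)
    rw [dist_comm y'] at ht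
    linarith
  linarith

/-- Endpoint-perturbation lower bound: for any point `k` and segments whose endpoints
are each perturbed by at most `ε`, `dist(k, segment(s',e')) ≥ dist(k, segment(s,e)) − ε`.
Consequently, if a lower bound `dlb` on the key-point deviation w.r.t. the nominal segment
satisfies `dlb − 2ε > ε'`, then some key point deviates from `segment(s',e')` by more
than `ε'`. -/
theorem stmt_12 (ε : ℝ) (s e s' e' : EuclideanSpace ℝ (Fin 2))
    (hs : dist s s' ≤ ε) (he : dist e e' ≤ ε) :
    (∀ k : EuclideanSpace ℝ (Fin 2),
      Metric.infDist k (segment ℝ s e) - ε ≤ Metric.infDist k (segment ℝ s' e')) ∧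
    (∀ (K : Finset (EuclideanSpace ℝ (Fin 2))) (hK : K.Nonempty) (dlb ε' : ℝ),
      dlb ≤ K.sup' hK (fun k => Metric.infDist k (segment ℝ s e)) →
      ε' < dlb - 2 * ε →
      ε' < K.sup' hK (fun k => Metric.infDist k (segment ℝ s' e'))) := by
  have hε : 0 ≤ ε := le_trans dist_nonneg hs
  refine ⟨seg_perturb ε s e s' e' hs he, ?_⟩
  intro K hK dlb ε' hdlb hlt
  obtain ⟨k, hkK, hksup⟩ := Finset.exists_mem_eq_sup' hK
    (fun k => Metric.infDist k (segment ℝ s e))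
  have h1 : dlb - ε ≤ Metric.infDist k (segment ℝ s' e') := by
    have := seg_perturb ε s e s' e' hs he k
    rw [hksup] at hdlb; linarith
  calc ε' < dlb - 2 * ε := hlt
    _ ≤ dlb - ε := by linarith
    _ ≤ Metric.infDist k (segment ℝ s' e') := h1
    _ ≤ K.sup' hK (fun k => Metric.infDist k (segment ℝ s' e')) :=
        Finset.le_sup' (fun k => Metric.infDist k (segment ℝ s' e')) hkK
end

section
/- Suppose each original point q satisfies dist(q, segment(kⱼ, kⱼ₊₁)) ≤ ε for its enclosing key-point pair, and the key points satisfy max_i dist(kᵢ, segment(s,e)) ≤ d̃_ub. Then every original point q satisfies dist(q, segment(s,e)) ≤ d̃_ub + ε. -/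
lemma infDist_segment_le {E : Type*} [NormedAddCommGroup E] [NormedSpace ℝ E]
    (a b : E) (S : Set E) (hS : Convex ℝ S) (hne : S.Nonempty) (d : ℝ)
    (ha : Metric.infDist a S ≤ d) (hb : Metric.infDist b S ≤ d)
    {x : E} (hx : x ∈ segment ℝ a b) : Metric.infDist x S ≤ d := by
  obtain ⟨u, v, hu, hv, huv, rfl⟩ := hx
  refine le_of_forall_pos_le_add fun δ hδ => ?_
  obtain ⟨p, hpS, hp⟩ := (Metric.infDist_lt_iff hne).1 (lt_of_le_of_lt ha (by linarith : d < d + δ))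
  obtain ⟨r, hrS, hr⟩ := (Metric.infDist_lt_iff hne).1 (lt_of_le_of_lt hb (by linarith : d < d + δ))
  have hmem : u • p + v • r ∈ S := hS hpS hrS hu hv huv
  have := Metric.infDist_le_dist_of_mem (x := u • a + v • b) hmem
  have hdist : dist (u • a + v • b) (u • p + v • r) ≤ u * dist a p + v * dist b r := by
    calc dist (u • a + v • b) (u • p + v • r)
        = ‖u • (a - p) + v • (b - r)‖ := by
          rw [dist_eq_norm]; congr 1; module
      _ ≤ ‖u • (a - p)‖ + ‖v • (b - r)‖ := norm_add_le _ _
      _ = u * dist a p + v * dist b r := by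
          rw [norm_smul, norm_smul, Real.norm_of_nonneg hu, Real.norm_of_nonneg hv,
            dist_eq_norm, dist_eq_norm]
  nlinarith [dist_nonneg (x := a) (y := p), dist_nonneg (x := b) (y := r)]

/-- Upper-bound half of the progressive-compression theorem with exact candidate
endpoints: if each original point `q` lies within `ε` of the segment between its
enclosing consecutive key points `k j`, `k (j+1)`, and every key point lies within
`dub` of `segment(s,e)`, then every original point lies within `dub + ε` of
`segment(s,e)`. -/
theorem stmt_15 (n : ℕ) (k : Fin (n + 1) → EuclideanSpace ℝ (Fin 2))
    (s e : EuclideanSpace ℝ (Fin 2)) (ε dub : ℝ)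
    (hkey : ∀ i, Metric.infDist (k i) (segment ℝ s e) ≤ dub) :
    ∀ (j : Fin n) (q : EuclideanSpace ℝ (Fin 2)),
      Metric.infDist q (segment ℝ (k j.castSucc) (k j.succ)) ≤ ε →
      Metric.infDist q (segment ℝ s e) ≤ dub + ε := by
  intro j q hq
  have hcpt : IsCompact (segment ℝ (k j.castSucc) (k j.succ)) := by
    rw [segment_eq_image]
    exact isCompact_Icc.image (by continuity)
  obtain ⟨x, hxmem, hxd⟩ := hcpt.exists_infDist_eq_dist
    ⟨_, left_mem_segment ℝ _ _⟩ q
  have h1 : Metric.infDist x (segment ℝ s e) ≤ dub :=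
    infDist_segment_le _ _ _ (convex_segment s e) ⟨s, left_mem_segment ℝ s e⟩ dub
      (hkey _) (hkey _) hxmem
  calc Metric.infDist q (segment ℝ s e)
      ≤ Metric.infDist x (segment ℝ s e) + dist q x := Metric.infDist_le_infDist_add_dist
    _ ≤ dub + ε := by
        rw [hxd] at hq
        have h2 : dist x q = dist q x := dist_comm x q
        linarith
end
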